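/- arXiv:2007.00446 — 4 statements merged into one kernel-verified Lean document; each statement's English description precedes it below -/
import Mathlib

section
/- Let d ≥ 2 be an integer and (ω₁, ω₂) ∈ 𝕊₁^{2d-1}. Then for all v₁, v₂, v₃ ∈ ℝ^d, writing (v₁*, v₂*, v₃*) = T_{ω₁,ω₂}(v₁, v₂, v₃), the following hold: (i) conservation of momentum: v₁* + v₂* + v₃* = v₁ + v₂ + v₃; (ii) conservation of energy: |v₁*|² + |v₂*|² + |v₃*|² = |v₁|² + |v₂|² + |v₃|²; (iii) conservation of relative velocity magnitudes: |v₁* − v₂*|² + |v₁* − v₃*|² + |v₂* − v₃*|² = |v₁ − v₂|² + |v₁ − v₃|² + |v₂ − v₃|²; (iv) micro-reversibility of the ternary cross-section: b₃(ω₁, ω₂, v₂* − v₁*, v₃* − v₁*) = −b₃(ω₁, ω₂, v₂ − v₁, v₃ − v₁); (v) T_{ω₁,ω₂} is a linear involution of ℝ^{3d} (T_{ω₁,ω₂} ∘ T_{ω₁,ω₂} = id), hence its determinant has absolute value 1 and T_{ω₁,ω₂} preserves Lebesgue measure on ℝ^{3d}. -/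
open MeasureTheory

/-- The ternary collisional transformation `T_{ω₁,ω₂} (v₁, v₂, v₃)`. -/
noncomputable def ternaryT {d : ℕ} (ω₁ ω₂ : EuclideanSpace ℝ (Fin d)) :
    EuclideanSpace ℝ (Fin d) × EuclideanSpace ℝ (Fin d) × EuclideanSpace ℝ (Fin d) →
      EuclideanSpace ℝ (Fin d) × EuclideanSpace ℝ (Fin d) × EuclideanSpace ℝ (Fin d) :=
  fun p =>
    let c : ℝ := ((inner ℝ ω₁ (p.2.1 - p.1) : ℝ) + (inner ℝ ω₂ (p.2.2 - p.1) : ℝ)) /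
      (1 + (inner ℝ ω₁ ω₂ : ℝ))
    (p.1 + c • (ω₁ + ω₂), p.2.1 - c • ω₁, p.2.2 - c • ω₂)

/-- The ternary cross-section `b₃(ω₁, ω₂, ν₁, ν₂)`. -/
noncomputable def ternaryB {d : ℕ} (ω₁ ω₂ ν₁ ν₂ : EuclideanSpace ℝ (Fin d)) : ℝ :=
  (inner ℝ ω₁ ν₁ : ℝ) + (inner ℝ ω₂ ν₂ : ℝ)

/-!
Put `x = (-(ω₁ + ω₂), ω₁, ω₂)` and give triples of velocities the inner product
`⟪p, q⟫ = ∑ᵢ ⟪pᵢ, qᵢ⟫`. Then `b₃(ω₁, ω₂, v₂ - v₁, v₃ - v₁) = ⟪v, x⟫`, and the sphere condition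
gives `⟪x, x⟫ = 2 (1 + ⟪ω₁, ω₂⟫) > 0`, so the collision coefficient is `c(v) = 2 ⟪v, x⟫ / ⟪x, x⟫`
and `T v = v - c(v) • x` is the orthogonal reflection in the hyperplane `x^⊥`. Every claim follows:
the components of `x` sum to zero (momentum), reflections are isometries (energy) that negate
`⟪·, x⟫` (micro-reversibility) and are linear involutions (so `|det T| = 1` and Lebesgue measure is
preserved); finally `∑_{i<j} |vᵢ - vⱼ|² = 3 ∑ |vᵢ|² - |∑ vᵢ|²` reduces the relative velocities to
momentum and energy.
-/

open Module Function
open scoped RealInnerProductSpace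

-- Mathlib registers this only for `μ.prod ν`, which instance search does not unfold `volume` to.
instance {E F : Type*} [NormedAddCommGroup E] [NormedSpace ℝ E] [MeasureSpace E] [BorelSpace E]
    [FiniteDimensional ℝ E] [(volume : Measure E).IsAddHaarMeasure] [NormedAddCommGroup F]
    [NormedSpace ℝ F] [MeasureSpace F] [BorelSpace F] [FiniteDimensional ℝ F]
    [(volume : Measure F).IsAddHaarMeasure] : (volume : Measure (E × F)).IsAddHaarMeasure :=
  Measure.prod.instIsAddHaarMeasure _ _

theorem LinearMap.abs_det_eq_one_of_involutive {R M : Type*} [CommRing R] [LinearOrder R]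
    [IsStrictOrderedRing R] [AddCommGroup M] [Module R M] {L : M →ₗ[R] M} (hL : Involutive L) :
    |LinearMap.det L| = 1 := by
  have hsq : LinearMap.det L * LinearMap.det L = 1 := by
    rw [← LinearMap.det_comp, show L ∘ₗ L = LinearMap.id from LinearMap.ext hL, LinearMap.det_id]
  rcases mul_self_eq_one_iff.mp hsq with h | h <;> simp [h]

theorem LinearMap.measurePreserving_of_abs_det_eq_one {E : Type*} [NormedAddCommGroup E]
    [NormedSpace ℝ E] [MeasurableSpace E] [BorelSpace E] [FiniteDimensional ℝ E]
    (μ : Measure E) [μ.IsAddHaarMeasure] {L : E →ₗ[ℝ] E} (hL : |LinearMap.det L| = 1) :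
    MeasurePreserving L μ μ := by
  have hdet : LinearMap.det L ≠ 0 := fun h ↦ by simp [h] at hL
  refine ⟨L.continuous_of_finiteDimensional.measurable, ?_⟩
  rw [Measure.map_linearMap_addHaar_eq_smul_addHaar μ hdet, abs_inv, hL, inv_one,
    ENNReal.ofReal_one, one_smul]

theorem Module.apply_reflection_eq_neg {R M : Type*} [CommRing R] [AddCommGroup M] [Module R M]
    {x : M} {f : Dual R M} (h : f x = 2) (y : M) : f (reflection h y) = -f y := by
  rw [reflection_apply, map_sub, map_smul, h, smul_eq_mul]
  ring

section Collision

variable {E : Type*} [NormedAddCommGroup E] [InnerProductSpace ℝ E]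

def totalMomentum (p : E × E × E) : E := p.1 + p.2.1 + p.2.2

def kineticEnergy (p : E × E × E) : ℝ := ‖p.1‖ ^ 2 + ‖p.2.1‖ ^ 2 + ‖p.2.2‖ ^ 2

theorem sum_pairwise_norm_sub_sq (p : E × E × E) :
    ‖p.1 - p.2.1‖ ^ 2 + ‖p.1 - p.2.2‖ ^ 2 + ‖p.2.1 - p.2.2‖ ^ 2 =
      3 * kineticEnergy p - ‖totalMomentum p‖ ^ 2 := by
  obtain ⟨a, b, c⟩ := p
  simp only [kineticEnergy, totalMomentum, ← real_inner_self_eq_norm_sq, inner_add_left,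
    inner_add_right, inner_sub_left, inner_sub_right, real_inner_comm a b, real_inner_comm a c,
    real_inner_comm b c]
  ring

/-- `p ↦ b₃(ω₁, ω₂, p₂ - p₁, p₃ - p₁)`. -/
def relativeImpact (ω₁ ω₂ : E) : Dual ℝ (E × E × E) where
  toFun p := ⟪ω₁, p.2.1 - p.1⟫ + ⟪ω₂, p.2.2 - p.1⟫
  map_add' p q := by simp only [Prod.fst_add, Prod.snd_add, inner_sub_right, inner_add_right]; ring
  map_smul' r p := by
    simp only [Prod.smul_fst, Prod.smul_snd, inner_sub_right, real_inner_smul_right,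
      RingHom.id_apply, smul_eq_mul]
    ring

def impactDirection (ω₁ ω₂ : E) : E × E × E := (-(ω₁ + ω₂), ω₁, ω₂)

noncomputable def collisionCoeff (ω₁ ω₂ : E) : Dual ℝ (E × E × E) :=
  (1 + ⟪ω₁, ω₂⟫)⁻¹ • relativeImpact ω₁ ω₂

variable {ω₁ ω₂ : E}

theorem one_add_inner_pos (hω : ‖ω₁‖ ^ 2 + ‖ω₂‖ ^ 2 = 1) : 0 < 1 + ⟪ω₁, ω₂⟫ := by
  nlinarith [neg_abs_le ⟪ω₁, ω₂⟫, abs_real_inner_le_norm ω₁ ω₂, sq_nonneg (‖ω₁‖ - ‖ω₂‖)]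

theorem relativeImpact_impactDirection (hω : ‖ω₁‖ ^ 2 + ‖ω₂‖ ^ 2 = 1) :
    relativeImpact ω₁ ω₂ (impactDirection ω₁ ω₂) = 2 * (1 + ⟪ω₁, ω₂⟫) := by
  simp only [relativeImpact, impactDirection, LinearMap.coe_mk, AddHom.coe_mk, sub_neg_eq_add,
    inner_add_right, real_inner_self_eq_norm_sq, real_inner_comm ω₁ ω₂]
  linear_combination 2 * hω

theorem collisionCoeff_impactDirection (hω : ‖ω₁‖ ^ 2 + ‖ω₂‖ ^ 2 = 1) :
    collisionCoeff ω₁ ω₂ (impactDirection ω₁ ω₂) = 2 := by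
  rw [collisionCoeff, LinearMap.smul_apply, relativeImpact_impactDirection hω, smul_eq_mul,
    mul_comm 2, inv_mul_cancel_left₀ (one_add_inner_pos hω).ne']

noncomputable def collisionReflection (hω : ‖ω₁‖ ^ 2 + ‖ω₂‖ ^ 2 = 1) :
    (E × E × E) ≃ₗ[ℝ] (E × E × E) :=
  reflection (collisionCoeff_impactDirection hω)

theorem totalMomentum_collisionReflection (hω : ‖ω₁‖ ^ 2 + ‖ω₂‖ ^ 2 = 1) (p : E × E × E) :
    totalMomentum (collisionReflection hω p) = totalMomentum p := by
  simp only [collisionReflection, reflection_apply, totalMomentum, impactDirection, Prod.fst_sub,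
    Prod.snd_sub, Prod.smul_fst, Prod.smul_snd, smul_neg, smul_add]
  abel

theorem kineticEnergy_collisionReflection (hω : ‖ω₁‖ ^ 2 + ‖ω₂‖ ^ 2 = 1) (p : E × E × E) :
    kineticEnergy (collisionReflection hω p) = kineticEnergy p := by
  obtain ⟨v₁, v₂, v₃⟩ := p
  have hc : collisionCoeff ω₁ ω₂ (v₁, v₂, v₃) * (1 + ⟪ω₁, ω₂⟫) = ⟪ω₁, v₂ - v₁⟫ + ⟪ω₂, v₃ - v₁⟫ := by
    rw [collisionCoeff, LinearMap.smul_apply, smul_eq_mul, mul_comm,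
      mul_inv_cancel_left₀ (one_add_inner_pos hω).ne']
    rfl
  simp only [collisionReflection, reflection_apply, kineticEnergy, impactDirection,
    Prod.mk_sub_mk, Prod.smul_mk]
  generalize collisionCoeff ω₁ ω₂ (v₁, v₂, v₃) = c at hc ⊢
  simp only [← real_inner_self_eq_norm_sq] at hω ⊢
  simp only [inner_add_left, inner_add_right, inner_sub_left, inner_sub_right, inner_neg_left,
    inner_neg_right, real_inner_smul_left, real_inner_smul_right] at hc ⊢
  simp only [real_inner_comm v₁, real_inner_comm v₂, real_inner_comm v₃,
    real_inner_comm ω₂ ω₁] at *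
  linear_combination (2 * c) * hc + (2 * c ^ 2) * hω

theorem relativeImpact_collisionReflection (hω : ‖ω₁‖ ^ 2 + ‖ω₂‖ ^ 2 = 1) (p : E × E × E) :
    relativeImpact ω₁ ω₂ (collisionReflection hω p) = -relativeImpact ω₁ ω₂ p := by
  have h : relativeImpact ω₁ ω₂ = (1 + ⟪ω₁, ω₂⟫) • collisionCoeff ω₁ ω₂ := by
    rw [collisionCoeff, smul_smul, mul_inv_cancel₀ (one_add_inner_pos hω).ne', one_smul]
  rw [h, LinearMap.smul_apply, LinearMap.smul_apply, collisionReflection,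
    apply_reflection_eq_neg, smul_neg]

end Collision

theorem ternaryT_eq_collisionReflection {d : ℕ} {ω₁ ω₂ : EuclideanSpace ℝ (Fin d)}
    (hω : ‖ω₁‖ ^ 2 + ‖ω₂‖ ^ 2 = 1) : ternaryT ω₁ ω₂ = collisionReflection hω := by
  ext ⟨v₁, v₂, v₃⟩ : 1
  simp only [ternaryT, collisionReflection, reflection_apply, collisionCoeff, relativeImpact,
    impactDirection, LinearMap.smul_apply, LinearMap.coe_mk, AddHom.coe_mk, smul_eq_mul,
    Prod.mk_sub_mk, Prod.smul_mk, div_eq_inv_mul, smul_neg, sub_neg_eq_add]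

theorem stmt_1_general (d : ℕ)
    (ω₁ ω₂ : EuclideanSpace ℝ (Fin d)) (hω : ‖ω₁‖ ^ 2 + ‖ω₂‖ ^ 2 = 1)
    (v₁ v₂ v₃ : EuclideanSpace ℝ (Fin d)) :
    -- (i) conservation of momentum
    (ternaryT ω₁ ω₂ (v₁, v₂, v₃)).1 + (ternaryT ω₁ ω₂ (v₁, v₂, v₃)).2.1 +
        (ternaryT ω₁ ω₂ (v₁, v₂, v₃)).2.2 = v₁ + v₂ + v₃ ∧
    -- (ii) conservation of energy
    ‖(ternaryT ω₁ ω₂ (v₁, v₂, v₃)).1‖ ^ 2 + ‖(ternaryT ω₁ ω₂ (v₁, v₂, v₃)).2.1‖ ^ 2 +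
        ‖(ternaryT ω₁ ω₂ (v₁, v₂, v₃)).2.2‖ ^ 2 = ‖v₁‖ ^ 2 + ‖v₂‖ ^ 2 + ‖v₃‖ ^ 2 ∧
    -- (iii) conservation of relative velocity magnitudes
    ‖(ternaryT ω₁ ω₂ (v₁, v₂, v₃)).1 - (ternaryT ω₁ ω₂ (v₁, v₂, v₃)).2.1‖ ^ 2 +
        ‖(ternaryT ω₁ ω₂ (v₁, v₂, v₃)).1 - (ternaryT ω₁ ω₂ (v₁, v₂, v₃)).2.2‖ ^ 2 +
        ‖(ternaryT ω₁ ω₂ (v₁, v₂, v₃)).2.1 - (ternaryT ω₁ ω₂ (v₁, v₂, v₃)).2.2‖ ^ 2 =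
      ‖v₁ - v₂‖ ^ 2 + ‖v₁ - v₃‖ ^ 2 + ‖v₂ - v₃‖ ^ 2 ∧
    -- (iv) micro-reversibility of the ternary cross-section
    ternaryB ω₁ ω₂ ((ternaryT ω₁ ω₂ (v₁, v₂, v₃)).2.1 - (ternaryT ω₁ ω₂ (v₁, v₂, v₃)).1)
        ((ternaryT ω₁ ω₂ (v₁, v₂, v₃)).2.2 - (ternaryT ω₁ ω₂ (v₁, v₂, v₃)).1) =
      -ternaryB ω₁ ω₂ (v₂ - v₁) (v₃ - v₁) ∧
    -- (v) `T_{ω₁,ω₂}` is a linear involution, it has determinant of absolute value 1,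
    -- and it preserves the Lebesgue measure on ℝ^{3d}
    (ternaryT ω₁ ω₂) ∘ (ternaryT ω₁ ω₂) = id ∧
    (∃ L : (EuclideanSpace ℝ (Fin d) × EuclideanSpace ℝ (Fin d) × EuclideanSpace ℝ (Fin d)) →ₗ[ℝ]
        (EuclideanSpace ℝ (Fin d) × EuclideanSpace ℝ (Fin d) × EuclideanSpace ℝ (Fin d)),
      ⇑L = ternaryT ω₁ ω₂ ∧ |LinearMap.det L| = 1) ∧
    MeasurePreserving (ternaryT ω₁ ω₂) volume volume := by
  rw [ternaryT_eq_collisionReflection hω]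
  have hmomentum := totalMomentum_collisionReflection hω (v₁, v₂, v₃)
  have henergy := kineticEnergy_collisionReflection hω (v₁, v₂, v₃)
  have hinvolutive := involutive_reflection (collisionCoeff_impactDirection hω)
  have hdet := LinearMap.abs_det_eq_one_of_involutive hinvolutive
  refine ⟨hmomentum, henergy, ?_, relativeImpact_collisionReflection hω _, hinvolutive.comp_self,
    ⟨_, rfl, hdet⟩, LinearMap.measurePreserving_of_abs_det_eq_one volume hdet⟩
  rw [sum_pairwise_norm_sub_sq, hmomentum, henergy]
  exact (sum_pairwise_norm_sub_sq (v₁, v₂, v₃)).symm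

theorem stmt_1 (d : ℕ) (hd : 2 ≤ d)
    (ω₁ ω₂ : EuclideanSpace ℝ (Fin d)) (hω : ‖ω₁‖ ^ 2 + ‖ω₂‖ ^ 2 = 1)
    (v₁ v₂ v₃ : EuclideanSpace ℝ (Fin d)) :
    -- (i) conservation of momentum
    (ternaryT ω₁ ω₂ (v₁, v₂, v₃)).1 + (ternaryT ω₁ ω₂ (v₁, v₂, v₃)).2.1 +
        (ternaryT ω₁ ω₂ (v₁, v₂, v₃)).2.2 = v₁ + v₂ + v₃ ∧
    -- (ii) conservation of energy
    ‖(ternaryT ω₁ ω₂ (v₁, v₂, v₃)).1‖ ^ 2 + ‖(ternaryT ω₁ ω₂ (v₁, v₂, v₃)).2.1‖ ^ 2 +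
        ‖(ternaryT ω₁ ω₂ (v₁, v₂, v₃)).2.2‖ ^ 2 = ‖v₁‖ ^ 2 + ‖v₂‖ ^ 2 + ‖v₃‖ ^ 2 ∧
    -- (iii) conservation of relative velocity magnitudes
    ‖(ternaryT ω₁ ω₂ (v₁, v₂, v₃)).1 - (ternaryT ω₁ ω₂ (v₁, v₂, v₃)).2.1‖ ^ 2 +
        ‖(ternaryT ω₁ ω₂ (v₁, v₂, v₃)).1 - (ternaryT ω₁ ω₂ (v₁, v₂, v₃)).2.2‖ ^ 2 +
        ‖(ternaryT ω₁ ω₂ (v₁, v₂, v₃)).2.1 - (ternaryT ω₁ ω₂ (v₁, v₂, v₃)).2.2‖ ^ 2 =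
      ‖v₁ - v₂‖ ^ 2 + ‖v₁ - v₃‖ ^ 2 + ‖v₂ - v₃‖ ^ 2 ∧
    -- (iv) micro-reversibility of the ternary cross-section
    ternaryB ω₁ ω₂ ((ternaryT ω₁ ω₂ (v₁, v₂, v₃)).2.1 - (ternaryT ω₁ ω₂ (v₁, v₂, v₃)).1)
        ((ternaryT ω₁ ω₂ (v₁, v₂, v₃)).2.2 - (ternaryT ω₁ ω₂ (v₁, v₂, v₃)).1) =
      -ternaryB ω₁ ω₂ (v₂ - v₁) (v₃ - v₁) ∧
    -- (v) `T_{ω₁,ω₂}` is a linear involution, it has determinant of absolute value 1,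
    -- and it preserves the Lebesgue measure on ℝ^{3d}
    (ternaryT ω₁ ω₂) ∘ (ternaryT ω₁ ω₂) = id ∧
    (∃ L : (EuclideanSpace ℝ (Fin d) × EuclideanSpace ℝ (Fin d) × EuclideanSpace ℝ (Fin d)) →ₗ[ℝ]
        (EuclideanSpace ℝ (Fin d) × EuclideanSpace ℝ (Fin d) × EuclideanSpace ℝ (Fin d)),
      ⇑L = ternaryT ω₁ ω₂ ∧ |LinearMap.det L| = 1) ∧
    MeasurePreserving (ternaryT ω₁ ω₂) volume volume :=
  stmt_1_general d ω₁ ω₂ hω v₁ v₂ v₃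
end

section
/- Let d ≥ 2 be an integer and R ≥ 1. There is a constant C > 0, depending only on d and R, such that for all δ > 0 and all 0 < σ₂ < σ₃ < 1 with 4δR ≤ σ₂, the following hold. (i) For every a ∈ ℝ^d, the Lebesgue measure of {x ∈ ℝ^d : σ₂ ≤ |x − a| ≤ σ₂ + 2δR} is at most Cδ. (ii) For all a, b ∈ ℝ^d, the Lebesgue measure of each of the sets {x ∈ ℝ^d : 2σ₃² ≤ |x − a|² + |x − b|² ≤ (√2 σ₃ + 4δR)²} and {x ∈ ℝ^d : 2σ₃² ≤ |a − x|² + |a − b|² ≤ (√2 σ₃ + 4δR)²} is at most Cδ. -/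
/-!
All three sets lie in a shell `{x | s₁ ≤ ‖x - c‖² ≤ s₂}` with `s₂ ≤ 9` and `s₂ - s₁ ≤ 16 δ R`: for
the second set this is Apollonius' identity
`‖x - a‖² + ‖x - b‖² = 2 ‖x - m‖² + ‖a - b‖² / 2` with `m` the midpoint of `a` and `b`, for the
third one `‖a - b‖` is a constant shift. Such a shell is the difference of two balls of radii
`r₁ ≤ r₂ ≤ 3`, of volume `(r₂ᵈ - r₁ᵈ) |B₁| ≤ d 3^(d-2) (r₂² - r₁²) |B₁|`, where `d ≥ 2` lets the
factor `r₂² - r₁² ≤ s₂ - s₁` absorb the `r₂ - r₁` coming from the mean value theorem.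
-/

open MeasureTheory Metric Module

theorem pow_sub_pow_le_mul_sq_sub_sq {α : Type*} [CommRing α] [LinearOrder α]
    [IsStrictOrderedRing α] {x y : α} {n : ℕ} (hn : 2 ≤ n) (hy : 0 ≤ y) (hyx : y ≤ x) :
    x ^ n - y ^ n ≤ n * x ^ (n - 2) * (x ^ 2 - y ^ 2) := by
  obtain ⟨m, rfl⟩ : ∃ m, n = m + 2 := ⟨n - 2, by omega⟩
  have hx : 0 ≤ x := hy.trans hyx
  have h := abs_pow_sub_pow_le x y (m + 2)
  rw [abs_of_nonneg (sub_nonneg.2 (pow_le_pow_left₀ hy hyx _)), abs_of_nonneg (sub_nonneg.2 hyx),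
    abs_of_nonneg hx, abs_of_nonneg hy, max_eq_left hyx] at h
  calc x ^ (m + 2) - y ^ (m + 2) ≤ (x - y) * (m + 2 : ℕ) * x ^ (m + 1) := h
    _ = (m + 2 : ℕ) * x ^ m * (x * (x - y)) := by ring
    _ ≤ (m + 2 : ℕ) * x ^ (m + 2 - 2) * (x ^ 2 - y ^ 2) := by
      rw [Nat.add_sub_cancel]
      gcongr
      nlinarith

theorem sqrt_two_mul_add_sq_le {σ w : ℝ} (hσ : 0 ≤ σ) (hσ₁ : σ ≤ 1) (hw : 0 ≤ w) (hw₁ : w ≤ 1) :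
    (√2 * σ + w) ^ 2 ≤ 3 ^ 2 ∧ (√2 * σ + w) ^ 2 - 2 * σ ^ 2 ≤ 4 * w := by
  have hsqrt2 : √2 * σ ≤ 3 / 2 := by
    nlinarith [Real.sq_sqrt zero_le_two, Real.sqrt_nonneg 2]
  constructor
  · gcongr
    linarith
  · rw [add_sq, mul_pow, Real.sq_sqrt zero_le_two]
    nlinarith [mul_le_mul_of_nonneg_right hsqrt2 hw, mul_le_mul_of_nonneg_right hw₁ hw]

theorem norm_sub_sq_add_norm_sub_sq_eq {E : Type*} [NormedAddCommGroup E] [InnerProductSpace ℝ E]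
    (x a b : E) :
    ‖x - a‖ ^ 2 + ‖x - b‖ ^ 2 = 2 * ‖x - midpoint ℝ a b‖ ^ 2 + ‖a - b‖ ^ 2 / 2 := by
  have := EuclideanGeometry.dist_sq_add_dist_sq_eq_two_mul_dist_midpoint_sq_add_half_dist_sq x a b
  simp only [dist_eq_norm] at this
  linarith

section Shell

variable {E : Type*} [NormedAddCommGroup E] [NormedSpace ℝ E] [FiniteDimensional ℝ E]
  [MeasurableSpace E] [BorelSpace E] (μ : Measure E) [μ.IsAddHaarMeasure]

theorem Measure.addHaar_closedBall_diff_ball [Nontrivial E] (c : E) {r₁ r₂ : ℝ} (h₁ : 0 ≤ r₁)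
    (h₁₂ : r₁ ≤ r₂) :
    μ (closedBall c r₂ \ ball c r₁)
      = ENNReal.ofReal (r₂ ^ finrank ℝ E - r₁ ^ finrank ℝ E) * μ (ball 0 1) := by
  rw [measure_sdiff (ball_subset_closedBall.trans (closedBall_subset_closedBall h₁₂))
      measurableSet_ball.nullMeasurableSet measure_ball_lt_top.ne,
    Measure.addHaar_closedBall μ c (h₁.trans h₁₂), Measure.addHaar_ball μ c h₁,
    ← ENNReal.sub_mul (fun _ _ ↦ measure_ball_lt_top.ne), ← ENNReal.ofReal_sub _ (by positivity)]

theorem addHaar_sq_norm_sub_shell_le (hE : 2 ≤ finrank ℝ E) (c : E) {s₁ s₂ ρ : ℝ}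
    (hρ : 0 ≤ ρ) (hs₂ρ : s₂ ≤ ρ ^ 2) :
    μ {x | s₁ ≤ ‖x - c‖ ^ 2 ∧ ‖x - c‖ ^ 2 ≤ s₂}
      ≤ ENNReal.ofReal (finrank ℝ E * ρ ^ (finrank ℝ E - 2) * (s₂ - s₁)) * μ (ball 0 1) := by
  have : Nontrivial E := Module.nontrivial_of_finrank_pos (R := ℝ) (by omega)
  rcases Set.eq_empty_or_nonempty {x | s₁ ≤ ‖x - c‖ ^ 2 ∧ ‖x - c‖ ^ 2 ≤ s₂} with h | ⟨x, hx₁, hx₂⟩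
  · simp [h]
  have hs₂ : 0 ≤ s₂ := (sq_nonneg _).trans hx₂
  have hsub : {x | s₁ ≤ ‖x - c‖ ^ 2 ∧ ‖x - c‖ ^ 2 ≤ s₂} ⊆ closedBall c √s₂ \ ball c √s₁ := by
    rintro y ⟨hy₁, hy₂⟩
    simp only [Set.mem_sdiff, mem_closedBall, mem_ball, dist_eq_norm, not_lt]
    exact ⟨Real.le_sqrt_of_sq_le hy₂, (Real.sqrt_le_left (norm_nonneg _)).2 hy₁⟩
  have hpow : √s₂ ^ finrank ℝ E - √s₁ ^ finrank ℝ E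
      ≤ finrank ℝ E * ρ ^ (finrank ℝ E - 2) * (s₂ - s₁) :=
    calc _ ≤ finrank ℝ E * √s₂ ^ (finrank ℝ E - 2) * (√s₂ ^ 2 - √s₁ ^ 2) :=
          pow_sub_pow_le_mul_sq_sub_sq hE (Real.sqrt_nonneg _)
            (Real.sqrt_le_sqrt (hx₁.trans hx₂))
      _ ≤ finrank ℝ E * ρ ^ (finrank ℝ E - 2) * (s₂ - s₁) := by
          rw [Real.sq_sqrt hs₂, Real.sq_sqrt']
          gcongr
          · exact sub_nonneg.2 (max_le (hx₁.trans hx₂) hs₂)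
          · exact (Real.sqrt_le_left hρ).2 hs₂ρ
          · exact le_max_left _ _
  calc μ {x | s₁ ≤ ‖x - c‖ ^ 2 ∧ ‖x - c‖ ^ 2 ≤ s₂}
      ≤ μ (closedBall c √s₂ \ ball c √s₁) := measure_mono hsub
    _ = ENNReal.ofReal (√s₂ ^ finrank ℝ E - √s₁ ^ finrank ℝ E) * μ (ball 0 1) :=
      Measure.addHaar_closedBall_diff_ball μ c (Real.sqrt_nonneg _)
        (Real.sqrt_le_sqrt (hx₁.trans hx₂))
    _ ≤ _ := by gcongr

theorem exists_addHaar_sq_norm_sub_shell_le (hE : 2 ≤ finrank ℝ E) {ρ : ℝ} (hρ : 0 < ρ) :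
    ∃ K > 0, ∀ (c : E) (s₁ s₂ : ℝ), s₂ ≤ ρ ^ 2 →
      μ {x | s₁ ≤ ‖x - c‖ ^ 2 ∧ ‖x - c‖ ^ 2 ≤ s₂} ≤ ENNReal.ofReal (K * (s₂ - s₁)) := by
  have : Nontrivial E := Module.nontrivial_of_finrank_pos (R := ℝ) (by omega)
  have hball : 0 < μ.real (ball 0 1) :=
    ENNReal.toReal_pos (measure_ball_pos μ 0 one_pos).ne' measure_ball_lt_top.ne
  refine ⟨finrank ℝ E * ρ ^ (finrank ℝ E - 2) * μ.real (ball 0 1),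
    mul_pos (mul_pos (Nat.cast_pos.2 (by omega)) (by positivity)) hball, fun c s₁ s₂ hs₂ ↦ ?_⟩
  refine (addHaar_sq_norm_sub_shell_le μ hE c hρ.le hs₂).trans_eq ?_
  rw [Measure.real, ← ENNReal.ofReal_toReal (measure_ball_lt_top (μ := μ)).ne,
    ← ENNReal.ofReal_mul' ENNReal.toReal_nonneg, ENNReal.toReal_ofReal ENNReal.toReal_nonneg]
  ring_nf

end Shell

theorem stmt_2 (d : ℕ) (hd : 2 ≤ d) (R : ℝ) (hR : 1 ≤ R) :
    ∃ C > 0, ∀ δ σ₂ σ₃ : ℝ, 0 < δ → 0 < σ₂ → σ₂ < σ₃ → σ₃ < 1 → 4 * δ * R ≤ σ₂ →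
      -- (i) spherical shells have measure at most C δ
      (∀ a : EuclideanSpace ℝ (Fin d),
        volume {x : EuclideanSpace ℝ (Fin d) | σ₂ ≤ ‖x - a‖ ∧ ‖x - a‖ ≤ σ₂ + 2 * δ * R}
          ≤ ENNReal.ofReal (C * δ)) ∧
      -- (ii) "ternary" shells have measure at most C δ
      (∀ a b : EuclideanSpace ℝ (Fin d),
        volume {x : EuclideanSpace ℝ (Fin d) |
            2 * σ₃ ^ 2 ≤ ‖x - a‖ ^ 2 + ‖x - b‖ ^ 2 ∧
            ‖x - a‖ ^ 2 + ‖x - b‖ ^ 2 ≤ (Real.sqrt 2 * σ₃ + 4 * δ * R) ^ 2}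
          ≤ ENNReal.ofReal (C * δ) ∧
        volume {x : EuclideanSpace ℝ (Fin d) |
            2 * σ₃ ^ 2 ≤ ‖a - x‖ ^ 2 + ‖a - b‖ ^ 2 ∧
            ‖a - x‖ ^ 2 + ‖a - b‖ ^ 2 ≤ (Real.sqrt 2 * σ₃ + 4 * δ * R) ^ 2}
          ≤ ENNReal.ofReal (C * δ)) := by
  obtain ⟨K, hK, hshell⟩ := exists_addHaar_sq_norm_sub_shell_le
    (volume : Measure (EuclideanSpace ℝ (Fin d))) (by simpa using hd) (ρ := 3) (by norm_num)
  refine ⟨16 * K * R, by positivity, fun δ σ₂ σ₃ hδ hσ₂ h₂₃ h₃ hδR ↦ ?_⟩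
  have thin_shell : ∀ c s₁ s₂, s₂ ≤ 3 ^ 2 → s₂ - s₁ ≤ 16 * δ * R →
      volume {x : EuclideanSpace ℝ (Fin d) | s₁ ≤ ‖x - c‖ ^ 2 ∧ ‖x - c‖ ^ 2 ≤ s₂}
        ≤ ENNReal.ofReal (16 * K * R * δ) := fun c s₁ s₂ hs₂ hw ↦
    (hshell c s₁ s₂ hs₂).trans (ENNReal.ofReal_le_ofReal (by nlinarith))
  have hδR₀ : 0 < δ * R := by positivity
  obtain ⟨h_outer, h_width⟩ := sqrt_two_mul_add_sq_le (σ := σ₃) (w := 4 * δ * R)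
    (hσ₂.trans h₂₃).le h₃.le (by positivity) (by linarith)
  refine ⟨fun a ↦ ?_, fun a b ↦ ⟨?_, ?_⟩⟩
  · refine (measure_mono ?_).trans (thin_shell a (σ₂ ^ 2) ((σ₂ + 2 * δ * R) ^ 2)
      (pow_le_pow_left₀ (by positivity) (by linarith) 2)
      (by nlinarith [mul_le_mul_of_nonneg_right h₂₃.le hδR₀.le]))
    rintro x ⟨h₁, h₂⟩
    exact ⟨pow_le_pow_left₀ hσ₂.le h₁ 2, pow_le_pow_left₀ (norm_nonneg _) h₂ 2⟩
  · simp only [norm_sub_sq_add_norm_sub_sq_eq _ a b]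
    refine (measure_mono ?_).trans (thin_shell (midpoint ℝ a b)
      (σ₃ ^ 2 - ‖a - b‖ ^ 2 / 4) (((√2 * σ₃ + 4 * δ * R) ^ 2 - ‖a - b‖ ^ 2 / 2) / 2)
      (by linarith [sq_nonneg ‖a - b‖]) (by linarith))
    rintro x ⟨h₁, h₂⟩
    constructor <;> linarith
  · refine (measure_mono ?_).trans (thin_shell a
      (2 * σ₃ ^ 2 - ‖a - b‖ ^ 2) ((√2 * σ₃ + 4 * δ * R) ^ 2 - ‖a - b‖ ^ 2)
      (by linarith [sq_nonneg ‖a - b‖]) (by linarith))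
    rintro x ⟨h₁, h₂⟩
    rw [norm_sub_rev a x] at h₁ h₂
    constructor <;> linarith
end

section
/- Let d ≥ 2 be an integer. There is a constant c ∈ (0,1), depending only on d, with the following property. Let R > 1 and 0 < δ, η, ε₀, α, ε₃ < 1 satisfy α ≤ c ε₀, ε₀ ≤ c η δ, R α ≤ c η ε₀ and ε₃ ≤ c α. Let ȳ₁, ȳ₂ ∈ ℝ^d with |ȳ₁ − ȳ₂| > ε₀ and let v₁ ∈ B_R^d. Then there exists a solid cylinder K of radius η in ℝ^d such that for every y₁ with |y₁ − ȳ₁| ≤ α, every y₂ with |y₂ − ȳ₂| ≤ α, and every v₂ ∈ B_R^d \ K: (i) |y₁ − y₂ − t(v₁ − v₂)| > √2 ε₃ for all t ≥ 0; (ii) |y₁ − y₂ − t(v₁ − v₂)| > ε₀ for all t ≥ δ. -/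
/-!
Take for `K` the cylinder of radius `η` around the line `v₁ + ℝ (ȳ₁ - ȳ₂)`. For `v₂ ∉ K` and
`t > 0`, `‖(ȳ₁ - ȳ₂) - t (v₁ - v₂)‖ = t ‖v₂ - (v₁ - t⁻¹ (ȳ₁ - ȳ₂))‖ > t η`, and moving the
positions by at most `α` costs `2α`. For `t ≥ δ` this leaves more than `δ η - 2α ≥ ε₀ / c - 2α`,
and for `t ≥ ε₀ / 4R` more than `4α - 2α = 2α ≥ √2 ε₃`. For smaller `t` the displacement
`t (v₁ - v₂)` has norm at most `ε₀ / 2`, so `‖y₁ - y₂‖ > ε₀ - 2α` again leaves more than `2α`.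
-/

open MeasureTheory

/-- `K` is a solid cylinder of radius `η` in ℝ^d: the set of points at distance at most `η`
from some affine line. -/
def IsSolidCylinder {d : ℕ} (η : ℝ) (K : Set (EuclideanSpace ℝ (Fin d))) : Prop :=
  ∃ p u : EuclideanSpace ℝ (Fin d), u ≠ 0 ∧
    K = {x | Metric.infDist x {y | ∃ t : ℝ, y = p + t • u} ≤ η}

section SolidCylinder

variable {E : Type*} [NormedAddCommGroup E] [NormedSpace ℝ E]

def solidCylinder (p u : E) (η : ℝ) : Set E :=
  {x | Metric.infDist x {y | ∃ t : ℝ, y = p + t • u} ≤ η}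

theorem isSolidCylinder_solidCylinder {d : ℕ} (p u : EuclideanSpace ℝ (Fin d)) (hu : u ≠ 0)
    (η : ℝ) : IsSolidCylinder η (solidCylinder p u η) :=
  ⟨p, u, hu, rfl⟩

theorem lt_norm_sub_of_notMem_solidCylinder {p u x : E} {η : ℝ}
    (hx : x ∉ solidCylinder p u η) (s : ℝ) : η < ‖x - (p + s • u)‖ := by
  rw [← dist_eq_norm]
  exact (not_le.mp hx).trans_le
    (Metric.infDist_le_dist_of_mem (s := {y | ∃ t : ℝ, y = p + t • u}) ⟨s, rfl⟩)

theorem mul_lt_norm_sub_smul_of_notMem_solidCylinder {v₁ v₂ w : E} {η t : ℝ}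
    (hv₂ : v₂ ∉ solidCylinder v₁ w η) (ht : 0 < t) : t * η < ‖w - t • (v₁ - v₂)‖ := by
  have hrescale : w - t • (v₁ - v₂) = t • (v₂ - (v₁ + (-t⁻¹) • w)) := by
    rw [smul_sub, smul_sub, smul_add, smul_smul, mul_neg, mul_inv_cancel₀ ht.ne', neg_smul,
      one_smul]
    abel
  rw [hrescale, norm_smul, Real.norm_of_nonneg ht.le]
  exact mul_lt_mul_of_pos_left (lt_norm_sub_of_notMem_solidCylinder hv₂ _) ht

theorem mul_sub_lt_norm_sub_smul_of_notMem_solidCylinder {v₁ v₂ w y : E} {η t a : ℝ}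
    (hv₂ : v₂ ∉ solidCylinder v₁ w η) (hy : ‖y - w‖ ≤ a) (ht : 0 < t) :
    t * η - a < ‖y - t • (v₁ - v₂)‖ := by
  have hw := mul_lt_norm_sub_smul_of_notMem_solidCylinder hv₂ ht
  linarith [norm_sub_le_norm_sub_add_norm_sub w y (t • (v₁ - v₂)), norm_sub_rev w y]

theorem two_mul_lt_norm_sub_smul {y u : E} {R η ε₀ α t : ℝ} (hR : 0 < R) (hη : 0 < η) (hα : 0 < α)
    (hαε₀ : α ≤ 1 / 16 * ε₀) (hRα : R * α ≤ 1 / 16 * (η * ε₀))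
    (hfar : ∀ s : ℝ, 0 < s → s * η - 2 * α < ‖y - s • u‖)
    (hy : ε₀ - 2 * α < ‖y‖) (hu : ‖u‖ ≤ 2 * R) (ht : 0 ≤ t) :
    2 * α < ‖y - t • u‖ := by
  rcases le_or_gt (4 * R * t) ε₀ with hsmall | hlarge
  · have hshift : ‖t • u‖ ≤ t * (2 * R) := by
      rw [norm_smul, Real.norm_of_nonneg ht]
      exact mul_le_mul_of_nonneg_left hu ht
    linarith [norm_sub_norm_le y (t • u)]
  · have ht0 : 0 < t := by nlinarith
    have hfour : 4 * α < t * η := by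
      have hRfour : R * (4 * α) < R * (t * η) := by nlinarith
      exact lt_of_mul_lt_mul_left hRfour hR.le
    linarith [hfar t ht0]

theorem sqrt_two_mul_lt_two_mul {α ε₃ : ℝ} (hα : 0 < α) (hε₃ : ε₃ ≤ 1 / 16 * α) :
    √2 * ε₃ < 2 * α := by
  have hsqrt : √2 * ε₃ ≤ √2 * (1 / 16 * α) := mul_le_mul_of_nonneg_left hε₃ (Real.sqrt_nonneg 2)
  nlinarith [Real.sqrt_two_lt_three_halves]

end SolidCylinder

theorem stmt_12_general (d : ℕ) :
    ∃ c : ℝ, 0 < c ∧ c < 1 ∧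
      ∀ R δ η ε₀ α ε₃ : ℝ,
        1 < R → 0 < δ → δ < 1 → 0 < η → η < 1 → 0 < ε₀ → ε₀ < 1 → 0 < α → α < 1 →
        0 < ε₃ → ε₃ < 1 →
        α ≤ c * ε₀ → ε₀ ≤ c * (η * δ) → R * α ≤ c * (η * ε₀) → ε₃ ≤ c * α →
        ∀ ybar₁ ybar₂ v₁ : EuclideanSpace ℝ (Fin d),
          ε₀ < ‖ybar₁ - ybar₂‖ → v₁ ∈ Metric.closedBall (0 : EuclideanSpace ℝ (Fin d)) R →
          ∃ K : Set (EuclideanSpace ℝ (Fin d)), IsSolidCylinder η K ∧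
            ∀ y₁ y₂ v₂ : EuclideanSpace ℝ (Fin d),
              ‖y₁ - ybar₁‖ ≤ α → ‖y₂ - ybar₂‖ ≤ α →
              v₂ ∈ Metric.closedBall (0 : EuclideanSpace ℝ (Fin d)) R \ K →
              (∀ t : ℝ, 0 ≤ t → Real.sqrt 2 * ε₃ < ‖y₁ - y₂ - t • (v₁ - v₂)‖) ∧
              (∀ t : ℝ, δ ≤ t → ε₀ < ‖y₁ - y₂ - t • (v₁ - v₂)‖) := by
  refine ⟨1 / 16, by norm_num, by norm_num, ?_⟩
  intro R δ η ε₀ α ε₃ hR hδ _ hη _ hε₀ _ hα _ _ _ hαε₀ hε₀ηδ hRα hε₃α ybar₁ ybar₂ v₁ hw hv₁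
  refine ⟨solidCylinder v₁ (ybar₁ - ybar₂) η,
    isSolidCylinder_solidCylinder _ _ (norm_pos_iff.mp (hε₀.trans hw)) η, ?_⟩
  rintro y₁ y₂ v₂ hy₁ hy₂ ⟨hv₂, hv₂K⟩
  have hy : ‖(y₁ - y₂) - (ybar₁ - ybar₂)‖ ≤ 2 * α := by
    rw [sub_sub_sub_comm]
    linarith [norm_sub_le (y₁ - ybar₁) (y₂ - ybar₂)]
  have hfar : ∀ t : ℝ, 0 < t → t * η - 2 * α < ‖y₁ - y₂ - t • (v₁ - v₂)‖ := fun t ht =>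
    mul_sub_lt_norm_sub_smul_of_notMem_solidCylinder hv₂K hy ht
  have hnear : ε₀ - 2 * α < ‖y₁ - y₂‖ := by
    linarith [norm_sub_norm_le (ybar₁ - ybar₂) (y₁ - y₂), norm_sub_rev (ybar₁ - ybar₂) (y₁ - y₂)]
  have hu : ‖v₁ - v₂‖ ≤ 2 * R := by
    rw [mem_closedBall_zero_iff] at hv₁ hv₂
    linarith [norm_sub_le v₁ v₂]
  refine ⟨fun t ht => (sqrt_two_mul_lt_two_mul hα hε₃α).trans
    (two_mul_lt_norm_sub_smul (by linarith) hη hα hαε₀ hRα hfar hnear hu ht), fun t ht => ?_⟩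
  have hδη : δ * η ≤ t * η := mul_le_mul_of_nonneg_right ht hη.le
  linarith [hfar t (hδ.trans_le ht)]

theorem stmt_12 (d : ℕ) (hd : 2 ≤ d) :
    ∃ c : ℝ, 0 < c ∧ c < 1 ∧
      ∀ R δ η ε₀ α ε₃ : ℝ,
        1 < R → 0 < δ → δ < 1 → 0 < η → η < 1 → 0 < ε₀ → ε₀ < 1 → 0 < α → α < 1 →
        0 < ε₃ → ε₃ < 1 →
        α ≤ c * ε₀ → ε₀ ≤ c * (η * δ) → R * α ≤ c * (η * ε₀) → ε₃ ≤ c * α →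
        ∀ ybar₁ ybar₂ v₁ : EuclideanSpace ℝ (Fin d),
          ε₀ < ‖ybar₁ - ybar₂‖ → v₁ ∈ Metric.closedBall (0 : EuclideanSpace ℝ (Fin d)) R →
          ∃ K : Set (EuclideanSpace ℝ (Fin d)), IsSolidCylinder η K ∧
            ∀ y₁ y₂ v₂ : EuclideanSpace ℝ (Fin d),
              ‖y₁ - ybar₁‖ ≤ α → ‖y₂ - ybar₂‖ ≤ α →
              v₂ ∈ Metric.closedBall (0 : EuclideanSpace ℝ (Fin d)) R \ K →
              (∀ t : ℝ, 0 ≤ t → Real.sqrt 2 * ε₃ < ‖y₁ - y₂ - t • (v₁ - v₂)‖) ∧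
              (∀ t : ℝ, δ ≤ t → ε₀ < ‖y₁ - y₂ - t • (v₁ - v₂)‖) :=
  stmt_12_general d
end

section
/- Let d ≥ 2 and s ≥ 1 be integers. There exist constants c ∈ (0,1), depending only on d, and C > 0, depending only on d and s, with the following property. Let R > 1 and 0 < δ, η, ε₀, α < 1 satisfy α ≤ c ε₀, ε₀ ≤ c η δ, R α ≤ c η ε₀, and let 0 < ε₂ ≤ c ε₃ with ε₃ ≤ c α. Then for every X_s = (x₁,…,x_s) ∈ Δ_s^X(ε₀) there is a measurable set M ⊆ B_R^{ds} with Lebesgue measure at most C R^{ds} η^{(d-1)/2}, such that for every V_s = (v₁,…,v_s) ∈ B_R^{ds} \ M the configuration Z_s = (X_s, V_s) belongs to G_s(ε₃, 0) ∩ G_s(ε₀, δ). -/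
/-!
For a pair `i < j` write `u` for the unit vector along `x i - x j` and `P` for the projection onto
`u⊥`. Since `P (x i - x j) = 0`, the relative position `x i - x j - t (v i - v j)` has norm at least
`t ‖P (v i - v j)‖`. So if `‖P (v i - v j)‖ > η`, the pair stays `ε₀` apart for `t ≥ δ` (as
`δ η ≥ ε₀`). For small `t` it stays `ε₃` apart: the pair starts more than `ε₀` apart and separates
at speed at most `2R`, and by the time this drift could matter, `t η` already exceeds `ε₃`. The bad
velocities of one pair form a slab: for fixed other velocities, `v i` lies within `η` of a line
segment of length `4R`, a set of volume `O(R η^(d-1))`, and Fubini gives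
`O(R^(ds) η^(d-1)) ≤ O(R^(ds) η^((d-1)/2))`.
-/

open MeasureTheory

noncomputable section

/-- ℝ^d. -/
abbrev Euc (d : ℕ) := EuclideanSpace ℝ (Fin d)

/-- The set of good configurations `G_m(θ, t₀)`. -/
def GoodConfig {d m : ℕ} (θ t₀ : ℝ) (x v : Fin m → Euc d) : Prop :=
  ∀ t : ℝ, t₀ ≤ t → ∀ i j : Fin m, i < j → θ < ‖(x i - t • v i) - (x j - t • v j)‖

end

open scoped RealInnerProductSpace ENNReal

section OrthComponent

variable {E : Type*} [NormedAddCommGroup E] [InnerProductSpace ℝ E]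

noncomputable def orthComponent (u : E) : E →L[ℝ] E :=
  ContinuousLinearMap.id ℝ E - (innerSL ℝ u).smulRight u

lemma orthComponent_apply (u w : E) : orthComponent u w = w - ⟪u, w⟫ • u := rfl

lemma norm_orthComponent_le {u : E} (hu : ‖u‖ = 1) (w : E) : ‖orthComponent u w‖ ≤ ‖w‖ := by
  have h : ‖orthComponent u w‖ ^ 2 = ‖w‖ ^ 2 - ⟪u, w⟫ ^ 2 := by
    rw [orthComponent_apply, norm_sub_sq_real, real_inner_smul_right, norm_smul, hu,
      real_inner_comm w u, Real.norm_eq_abs, mul_one, sq_abs]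
    ring
  nlinarith [norm_nonneg (orthComponent u w), norm_nonneg w, sq_nonneg ⟪u, w⟫]

lemma orthComponent_normalize_self (X : E) : orthComponent (‖X‖⁻¹ • X) X = 0 := by
  rcases eq_or_ne X 0 with rfl | hX
  · simp
  rw [orthComponent_apply, real_inner_smul_left, real_inner_self_eq_norm_sq, smul_smul,
    sub_eq_zero]
  field_simp
  simp

lemma abs_mul_norm_orthComponent_le {u X : E} (hu : ‖u‖ = 1) (hX : orthComponent u X = 0)
    (t : ℝ) (W : E) : |t| * ‖orthComponent u W‖ ≤ ‖X - t • W‖ := by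
  calc |t| * ‖orthComponent u W‖ = ‖orthComponent u (X - t • W)‖ := by
        rw [map_sub, map_smul, hX, zero_sub, norm_neg, norm_smul, Real.norm_eq_abs]
    _ ≤ ‖X - t • W‖ := norm_orthComponent_le hu _

end OrthComponent

section Trajectory

variable {E : Type*} [NormedAddCommGroup E] [InnerProductSpace ℝ E]
variable {u X W : E} {η : ℝ}

lemma lt_norm_sub_smul_of_le (hu : ‖u‖ = 1) (hX : orthComponent u X = 0)
    (hW : η < ‖orthComponent u W‖) {δ ε t : ℝ} (hδ : 0 < δ) (hη : 0 ≤ η) (hε : ε ≤ δ * η)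
    (ht : δ ≤ t) : ε < ‖X - t • W‖ := by
  have hmain := abs_mul_norm_orthComponent_le hu hX t W
  rw [abs_of_pos (hδ.trans_le ht)] at hmain
  nlinarith

lemma lt_norm_sub_smul_of_nonneg (hu : ‖u‖ = 1) (hX : orthComponent u X = 0)
    (hW : η < ‖orthComponent u W‖) {L ε ε' t : ℝ} (hη : 0 < η) (hWL : ‖W‖ ≤ L)
    (hXε : ε < ‖X‖) (hε' : 2 * ε' ≤ ε) (hLε' : 2 * L * ε' ≤ η * ε) (ht : 0 ≤ t) :
    ε' < ‖X - t • W‖ := by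
  -- Either the drift `t ‖W‖` is at most `ε / 2`, or the orthogonal drift `t η` exceeds `ε'`.
  rcases le_or_gt (t * L) (ε / 2) with hsmall | hlarge
  · have hdrift : ‖t • W‖ ≤ t * L := by
      rw [norm_smul, Real.norm_of_nonneg ht]
      exact mul_le_mul_of_nonneg_left hWL ht
    linarith [norm_sub_norm_le X (t • W)]
  · have hmain := abs_mul_norm_orthComponent_le hu hX t W
    rw [abs_of_nonneg ht] at hmain
    have hL : 0 ≤ L := (norm_nonneg W).trans hWL
    nlinarith [mul_le_mul_of_nonneg_left hW.le ht]

end Trajectory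

section Slab

lemma volume_setOf_forall_abs_apply_le {ι : Type*} [Fintype ι] (f : ι → ℝ) :
    volume {z : EuclideanSpace ℝ ι | ∀ k, |z k| ≤ f k} = ∏ k, ENNReal.ofReal (2 * f k) := by
  have hbox : {z : EuclideanSpace ℝ ι | ∀ k, |z k| ≤ f k}
      = (MeasurableEquiv.toLp 2 (ι → ℝ)).symm ⁻¹' Set.univ.pi fun k => Set.Icc (-f k) (f k) := by
    ext z
    simp only [Set.mem_ofPred_eq, Set.mem_preimage, Set.mem_univ_pi, Set.mem_Icc, abs_le]
    rfl
  rw [hbox, (EuclideanSpace.volume_preserving_symm_measurableEquiv_toLp ι).measure_preimage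
    (MeasurableSet.univ_pi fun _ => measurableSet_Icc).nullMeasurableSet, volume_pi_pi]
  simp [Real.volume_Icc, two_mul]

variable {E : Type*} [NormedAddCommGroup E] [InnerProductSpace ℝ E] [FiniteDimensional ℝ E]
  [MeasurableSpace E] [BorelSpace E]

lemma volume_slab_le (hE : 0 < Module.finrank ℝ E) {u : E} (hu : ‖u‖ = 1) {r ρ : ℝ}
    (hr : 0 ≤ r) (hρ : 0 ≤ ρ) :
    volume {w : E | ‖w‖ ≤ r ∧ ‖orthComponent u w‖ ≤ ρ}
      ≤ ENNReal.ofReal (2 * r * (2 * ρ) ^ (Module.finrank ℝ E - 1)) := by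
  obtain ⟨n, hn⟩ : ∃ n, Module.finrank ℝ E = n + 1 := Nat.exists_eq_add_one.mpr hE
  -- In an orthonormal basis starting with `u` the slab lies in a box with sides `2r, 2ρ, …, 2ρ`.
  have hu' : Orthonormal ℝ (({0} : Set (Fin (n + 1))).domRestrict fun _ => u) :=
    orthonormal_subsingleton_iff.mpr fun _ => hu
  obtain ⟨b, hb⟩ := hu'.exists_orthonormalBasis_extension_of_card_eq (by simp [hn])
  have hb0 : b 0 = u := hb 0 rfl
  set f : Fin (n + 1) → ℝ := Fin.cons r fun _ => ρ
  set box := {z : EuclideanSpace ℝ (Fin (n + 1)) | ∀ k, |z k| ≤ f k}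
  have hsub : {w : E | ‖w‖ ≤ r ∧ ‖orthComponent u w‖ ≤ ρ} ⊆ b.measurableEquiv ⁻¹' box := by
    rintro w ⟨hw, hperp⟩ k
    change |b.repr w k| ≤ f k
    refine Fin.cases ?_ (fun k => ?_) k
    · calc |b.repr w 0| ≤ ‖b.repr w‖ := PiLp.norm_apply_le (b.repr w) 0
        _ ≤ r := by rwa [b.repr.norm_map]
    · have hcoord : b.repr (orthComponent u w) k.succ = b.repr w k.succ := by
        simp [orthComponent_apply, ← hb0, Fin.succ_ne_zero]
      calc |b.repr w k.succ| ≤ ‖b.repr (orthComponent u w)‖ := by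
            rw [← hcoord]; exact PiLp.norm_apply_le (b.repr (orthComponent u w)) k.succ
        _ ≤ ρ := by rwa [b.repr.norm_map]
  have hbox : MeasurableSet box := by
    simp only [box, Set.ofPred_forall]
    exact (isClosed_iInter fun k => isClosed_le (by fun_prop) continuous_const).measurableSet
  calc volume {w : E | ‖w‖ ≤ r ∧ ‖orthComponent u w‖ ≤ ρ}
      ≤ volume (b.measurableEquiv ⁻¹' box) := measure_mono hsub
    _ = volume box := b.measurePreserving_measurableEquiv.measure_preimage hbox.nullMeasurableSet
    _ = ∏ k, ENNReal.ofReal (2 * f k) := volume_setOf_forall_abs_apply_le f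
    _ = ENNReal.ofReal (2 * r * (2 * ρ) ^ (Module.finrank ℝ E - 1)) := by
      simp only [Fin.prod_univ_succ, f, Fin.cons_zero, Fin.cons_succ, Finset.prod_const,
        Finset.card_univ, Fintype.card_fin]
      rw [hn, Nat.add_sub_cancel, ← ENNReal.ofReal_pow (by positivity),
        ← ENNReal.ofReal_mul (by positivity)]

end Slab

section PairBadSet

variable {E : Type*} [NormedAddCommGroup E] [InnerProductSpace ℝ E] {m n : ℕ}

def pairBadSet (R η : ℝ) (u : E) (i j : Fin m) : Set (Fin m → E) :=
  {v | (∀ k, ‖v k‖ ≤ R) ∧ ‖orthComponent u (v i - v j)‖ ≤ η}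

lemma isClosed_pairBadSet (R η : ℝ) (u : E) (i j : Fin m) : IsClosed (pairBadSet R η u i j) := by
  simp only [pairBadSet, Set.ofPred_and, Set.ofPred_forall]
  exact (isClosed_iInter fun k => isClosed_le (by fun_prop) continuous_const).inter
    (isClosed_le (by fun_prop) continuous_const)

variable [FiniteDimensional ℝ E] [MeasurableSpace E] [BorelSpace E]
variable {R η : ℝ} {u : E}

lemma volume_insertNth_preimage_pairBadSet_le (hE : 0 < Module.finrank ℝ E) (hR : 0 ≤ R)
    (hη : 0 ≤ η) (hu : ‖u‖ = 1) (i : Fin (n + 1)) (j : Fin n) (rest : Fin n → E) :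
    volume {w : E | i.insertNth w rest ∈ pairBadSet R η u i (i.succAbove j)}
      ≤ (Set.univ.pi fun _ => Metric.closedBall (0 : E) R).indicator
          (fun _ => ENNReal.ofReal (2 * (2 * R) * (2 * η) ^ (Module.finrank ℝ E - 1))) rest := by
  by_cases hrest : rest ∈ Set.univ.pi fun _ => Metric.closedBall (0 : E) R
  · rw [Set.indicator_of_mem hrest]
    calc volume {w : E | i.insertNth w rest ∈ pairBadSet R η u i (i.succAbove j)}
        ≤ volume ((fun w => w + -rest j) ⁻¹'
            {w : E | ‖w‖ ≤ 2 * R ∧ ‖orthComponent u w‖ ≤ η}) := by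
          refine measure_mono fun w ⟨hbound, hperp⟩ => ⟨?_, ?_⟩
          · have hw : ‖w‖ ≤ R := by simpa using hbound i
            have hj : ‖rest j‖ ≤ R := by simpa using hrest j (Set.mem_univ j)
            calc ‖w + -rest j‖ ≤ ‖w‖ + ‖-rest j‖ := norm_add_le _ _
              _ ≤ 2 * R := by rw [norm_neg]; linarith
          · simpa [sub_eq_add_neg] using hperp
      _ = volume {w : E | ‖w‖ ≤ 2 * R ∧ ‖orthComponent u w‖ ≤ η} :=
          measure_preimage_add_right _ _ _
      _ ≤ _ := volume_slab_le hE hu (by linarith) hη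
  · rw [Set.indicator_of_notMem hrest, nonpos_iff_eq_zero,
      ← measure_empty (μ := (volume : Measure E))]
    congr 1
    ext w
    simp only [Set.mem_ofPred_eq, Set.mem_empty_iff_false, iff_false]
    exact fun hw => hrest fun k _ => by simpa using hw.1 (i.succAbove k)

lemma volume_pairBadSet_le (hE : 0 < Module.finrank ℝ E) (hR : 0 ≤ R) (hη : 0 ≤ η)
    (hu : ‖u‖ = 1) {i j : Fin m} (hij : i ≠ j) :
    volume (pairBadSet R η u i j)
      ≤ ENNReal.ofReal (2 * (2 * R) * (2 * η) ^ (Module.finrank ℝ E - 1))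
          * volume (Metric.closedBall (0 : E) R) ^ (m - 1) := by
  obtain ⟨n, rfl⟩ : ∃ n, m = n + 1 := Nat.exists_eq_add_one.mpr i.pos
  obtain ⟨j, rfl⟩ := Fin.exists_succAbove_eq hij.symm
  set e := MeasurableEquiv.piFinSuccAbove (fun _ : Fin (n + 1) => E) i
  have hA := (isClosed_pairBadSet R η u i (i.succAbove j)).measurableSet
  calc volume (pairBadSet R η u i (i.succAbove j))
      = volume (e.symm ⁻¹' pairBadSet R η u i (i.succAbove j)) :=
        (((volume_preserving_piFinSuccAbove _ i).symm e).measure_preimage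
          hA.nullMeasurableSet).symm
    _ = ∫⁻ rest, volume {w : E | i.insertNth w rest ∈ pairBadSet R η u i (i.succAbove j)} := by
        rw [Measure.volume_eq_prod, Measure.prod_apply_symm (e.symm.measurable hA)]
        rfl
    _ ≤ ∫⁻ rest, (Set.univ.pi fun _ => Metric.closedBall (0 : E) R).indicator
          (fun _ => ENNReal.ofReal (2 * (2 * R) * (2 * η) ^ (Module.finrank ℝ E - 1))) rest :=
        lintegral_mono fun rest => volume_insertNth_preimage_pairBadSet_le hE hR hη hu i j rest
    _ = _ := by
        rw [lintegral_indicator_const (MeasurableSet.univ_pi fun _ => measurableSet_closedBall),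
          volume_pi_pi]
        simp

lemma volume_pairBadSet_le_rpow (hE : 0 < Module.finrank ℝ E) (hR : 1 ≤ R) (hη : 0 < η)
    (hη1 : η ≤ 1) (hu : ‖u‖ = 1) {i j : Fin m} (hij : i ≠ j) :
    volume (pairBadSet R η u i j)
      ≤ ENNReal.ofReal (2 ^ (Module.finrank ℝ E + 1)
          * (volume (Metric.ball (0 : E) 1)).toReal ^ (m - 1)
          * R ^ (Module.finrank ℝ E * m) * η ^ (((Module.finrank ℝ E : ℝ) - 1) / 2)) := by
  set β := (volume (Metric.ball (0 : E) 1)).toReal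
  obtain ⟨k, hk⟩ : ∃ k, Module.finrank ℝ E = k + 1 := Nat.exists_eq_add_one.mpr hE
  obtain ⟨l, hl⟩ : ∃ l, m = l + 1 := Nat.exists_eq_add_one.mpr i.pos
  have hball : volume (Metric.closedBall (0 : E) R) = ENNReal.ofReal (R ^ (k + 1) * β) := by
    rw [Measure.addHaar_closedBall _ _ (by linarith), hk, ENNReal.ofReal_mul (by positivity),
      ENNReal.ofReal_toReal measure_ball_lt_top.ne]
  have hηpow : η ^ k ≤ η ^ ((((k + 1 : ℕ) : ℝ) - 1) / 2) := by
    rw [← Real.rpow_natCast]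
    exact Real.rpow_le_rpow_of_exponent_ge hη hη1
      (by push_cast; linarith [(k.cast_nonneg : (0 : ℝ) ≤ k)])
  have hRpow : R * R ^ ((k + 1) * l) ≤ R ^ ((k + 1) * (l + 1)) := by
    rw [← pow_succ']
    exact pow_le_pow_right₀ hR (by rw [Nat.mul_succ]; omega)
  calc volume (pairBadSet R η u i j)
      ≤ ENNReal.ofReal (2 * (2 * R) * (2 * η) ^ k) * ENNReal.ofReal (R ^ (k + 1) * β) ^ l := by
        simpa [hk, hl, hball] using volume_pairBadSet_le hE (zero_le_one.trans hR) hη.le hu hij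
    _ = ENNReal.ofReal (2 ^ (k + 2) * β ^ l * (R * R ^ ((k + 1) * l)) * η ^ k) := by
        rw [← ENNReal.ofReal_pow (by positivity), ← ENNReal.ofReal_mul (by positivity)]
        congr 1
        ring
    _ ≤ _ := by
        rw [hk, hl, Nat.add_sub_cancel]
        gcongr

end PairBadSet

section BadVelocities

variable {E : Type*} [NormedAddCommGroup E] [InnerProductSpace ℝ E] {m : ℕ} {R η : ℝ}

lemma norm_le_of_sum_norm_sq_le {ι F : Type*} [Fintype ι] [SeminormedAddCommGroup F]
    {v : ι → F} (hR : 0 ≤ R) (hv : ∑ i, ‖v i‖ ^ 2 ≤ R ^ 2) (k : ι) : ‖v k‖ ≤ R :=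
  le_of_pow_le_pow_left₀ two_ne_zero hR <|
    (Finset.single_le_sum (f := fun i => ‖v i‖ ^ 2) (fun _ _ => by positivity)
      (Finset.mem_univ k)).trans hv

def badVelocities (R η : ℝ) (x : Fin m → E) : Set (Fin m → E) :=
  {v | ∑ i, ‖v i‖ ^ 2 ≤ R ^ 2} ∩
    ⋃ p ∈ Finset.univ.filter (fun p : Fin m × Fin m => p.1 < p.2),
      pairBadSet R η (‖x p.1 - x p.2‖⁻¹ • (x p.1 - x p.2)) p.1 p.2

lemma lt_norm_orthComponent_of_notMem_badVelocities {x v : Fin m → E} (hR : 0 ≤ R)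
    (hv : ∑ i, ‖v i‖ ^ 2 ≤ R ^ 2) (hvM : v ∉ badVelocities R η x) {i j : Fin m} (hij : i < j) :
    η < ‖orthComponent (‖x i - x j‖⁻¹ • (x i - x j)) (v i - v j)‖ := by
  by_contra! h
  exact hvM ⟨hv, Set.mem_biUnion (x := (i, j)) (by simpa using hij)
    ⟨norm_le_of_sum_norm_sq_le hR hv, h⟩⟩

variable [FiniteDimensional ℝ E] [MeasurableSpace E] [BorelSpace E]

lemma measurableSet_badVelocities (R η : ℝ) (x : Fin m → E) :
    MeasurableSet (badVelocities R η x) :=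
  ((isClosed_le (by fun_prop) continuous_const).inter
    (isClosed_biUnion_finset fun _ _ => isClosed_pairBadSet _ _ _ _ _)).measurableSet

lemma volume_badVelocities_le (hE : 0 < Module.finrank ℝ E) (hR : 1 ≤ R) (hη : 0 < η)
    (hη1 : η ≤ 1) {x : Fin m → E} (hx : ∀ i j, i < j → x i ≠ x j) :
    volume (badVelocities R η x)
      ≤ ENNReal.ofReal (m ^ 2 * (2 ^ (Module.finrank ℝ E + 1)
          * (volume (Metric.ball (0 : E) 1)).toReal ^ (m - 1)
          * R ^ (Module.finrank ℝ E * m) * η ^ (((Module.finrank ℝ E : ℝ) - 1) / 2))) := by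
  set K := 2 ^ (Module.finrank ℝ E + 1) * (volume (Metric.ball (0 : E) 1)).toReal ^ (m - 1)
    * R ^ (Module.finrank ℝ E * m) * η ^ (((Module.finrank ℝ E : ℝ) - 1) / 2)
  have hK : 0 ≤ K := by positivity
  set F := Finset.univ.filter (fun p : Fin m × Fin m => p.1 < p.2)
  have hF : (F.card : ℝ) ≤ m ^ 2 := by
    rw [sq]
    exact_mod_cast (Finset.card_filter_le _ _).trans_eq (by simp)
  calc volume (badVelocities R η x)
      ≤ volume (⋃ p ∈ F, pairBadSet R η (‖x p.1 - x p.2‖⁻¹ • (x p.1 - x p.2)) p.1 p.2) :=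
        measure_mono Set.inter_subset_right
    _ ≤ ∑ p ∈ F, volume (pairBadSet R η (‖x p.1 - x p.2‖⁻¹ • (x p.1 - x p.2)) p.1 p.2) :=
        measure_biUnion_finset_le _ _
    _ ≤ ∑ _p ∈ F, ENNReal.ofReal K := Finset.sum_le_sum fun p hp => by
        have hlt := (Finset.mem_filter.mp hp).2
        exact volume_pairBadSet_le_rpow hE hR hη hη1
          (norm_smul_inv_norm (sub_ne_zero.mpr (hx _ _ hlt))) hlt.ne
    _ = ENNReal.ofReal (F.card * K) := by
        rw [Finset.sum_const, nsmul_eq_mul, ENNReal.ofReal_mul (p := (F.card : ℝ)) (by positivity),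
          ENNReal.ofReal_natCast]
    _ ≤ _ := ENNReal.ofReal_le_ofReal (mul_le_mul_of_nonneg_right hF hK)

end BadVelocities

lemma goodConfig_of_forall {d m : ℕ} {θ t₀ : ℝ} {x v : Fin m → Euc d}
    (h : ∀ i j, i < j → ∀ t, t₀ ≤ t → θ < ‖(x i - x j) - t • (v i - v j)‖) :
    GoodConfig θ t₀ x v := fun t ht i j hij => by
  rw [show (x i - t • v i) - (x j - t • v j) = (x i - x j) - t • (v i - v j) by module]
  exact h i j hij t ht

theorem stmt_15_general (d s : ℕ) (hd : 2 ≤ d) :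
    ∃ c : ℝ, 0 < c ∧ c < 1 ∧ ∃ C > 0,
      ∀ R δ η ε₀ α ε₂ ε₃ : ℝ,
        1 < R → 0 < δ → δ < 1 → 0 < η → η < 1 → 0 < ε₀ → ε₀ < 1 → 0 < α → α < 1 →
        α ≤ c * ε₀ → ε₀ ≤ c * (η * δ) → R * α ≤ c * (η * ε₀) →
        0 < ε₂ → ε₂ ≤ c * ε₃ → ε₃ ≤ c * α →
        ∀ x : Fin s → Euc d, (∀ i j : Fin s, i < j → ε₀ < ‖x i - x j‖) →
          ∃ M : Set (Fin s → Euc d), MeasurableSet M ∧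
            M ⊆ {v : Fin s → Euc d | ∑ i, ‖v i‖ ^ 2 ≤ R ^ 2} ∧
            volume M ≤ ENNReal.ofReal (C * R ^ (d * s) * η ^ (((d : ℝ) - 1) / 2)) ∧
            ∀ v : Fin s → Euc d, (∑ i, ‖v i‖ ^ 2 ≤ R ^ 2) → v ∉ M →
              GoodConfig ε₃ 0 x v ∧ GoodConfig ε₀ δ x v := by
  have hdim : 0 < Module.finrank ℝ (Euc d) := by simp; omega
  set β := (volume (Metric.ball (0 : Euc d) 1)).toReal
  have hβ : 0 < β :=
    ENNReal.toReal_pos (Metric.measure_ball_pos _ _ one_pos).ne' measure_ball_lt_top.ne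
  -- With `c = 1 / 2` the hypotheses give `2 ε₃ ≤ ε₀`, `4 R ε₃ ≤ η ε₀` and `ε₀ ≤ δ η`.
  refine ⟨1 / 2, by norm_num, by norm_num, (s + 1) ^ 2 * (2 ^ (d + 1) * β ^ (s - 1)),
    by positivity, ?_⟩
  intro R δ η ε₀ α ε₂ ε₃ hR hδ _ hη hη1 hε₀ _ _ _ hαc hε₀c hRαc _ _ hε₃c x hx
  have hx_ne : ∀ i j, i < j → x i ≠ x j := fun i j hij hxij => by
    simpa [hxij] using hε₀.trans (hx i j hij)
  refine ⟨badVelocities R η x, measurableSet_badVelocities R η x, Set.inter_subset_left, ?_,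
    fun v hv hvM => ?_⟩
  · refine (volume_badVelocities_le hdim hR.le hη hη1.le hx_ne).trans
      (ENNReal.ofReal_le_ofReal ?_)
    simp only [finrank_euclideanSpace_fin]
    calc (s : ℝ) ^ 2 * (2 ^ (d + 1) * β ^ (s - 1) * R ^ (d * s) * η ^ (((d : ℝ) - 1) / 2))
        ≤ (s + 1) ^ 2 * (2 ^ (d + 1) * β ^ (s - 1) * R ^ (d * s) * η ^ (((d : ℝ) - 1) / 2)) := by
          gcongr; linarith
      _ = _ := by ring
  · have hperp := fun i j (hij : i < j) =>
      lt_norm_orthComponent_of_notMem_badVelocities (by linarith) hv hvM hij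
    have hunit : ∀ i j, i < j → ‖‖x i - x j‖⁻¹ • (x i - x j)‖ = 1 := fun i j hij =>
      norm_smul_inv_norm (sub_ne_zero.mpr (hx_ne i j hij))
    refine ⟨goodConfig_of_forall fun i j hij t ht => ?_,
      goodConfig_of_forall fun i j hij t ht => ?_⟩
    · have hW : ‖v i - v j‖ ≤ 2 * R := (norm_sub_le _ _).trans (by
        linarith [norm_le_of_sum_norm_sq_le (by linarith) hv i,
          norm_le_of_sum_norm_sq_le (by linarith) hv j])
      exact lt_norm_sub_smul_of_nonneg (hunit i j hij) (orthComponent_normalize_self _)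
        (hperp i j hij) hη hW (hx i j hij) (by linarith)
        (by nlinarith [mul_le_mul_of_nonneg_left hε₃c (by linarith : (0 : ℝ) ≤ R)]) ht
    · exact lt_norm_sub_smul_of_le (hunit i j hij) (orthComponent_normalize_self _)
        (hperp i j hij) hδ hη.le (by nlinarith [mul_pos hη hδ]) ht

theorem stmt_15 (d s : ℕ) (hd : 2 ≤ d) (hs : 1 ≤ s) :
    ∃ c : ℝ, 0 < c ∧ c < 1 ∧ ∃ C > 0,
      ∀ R δ η ε₀ α ε₂ ε₃ : ℝ,
        1 < R → 0 < δ → δ < 1 → 0 < η → η < 1 → 0 < ε₀ → ε₀ < 1 → 0 < α → α < 1 →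
        α ≤ c * ε₀ → ε₀ ≤ c * (η * δ) → R * α ≤ c * (η * ε₀) →
        0 < ε₂ → ε₂ ≤ c * ε₃ → ε₃ ≤ c * α →
        ∀ x : Fin s → Euc d, (∀ i j : Fin s, i < j → ε₀ < ‖x i - x j‖) →
          ∃ M : Set (Fin s → Euc d), MeasurableSet M ∧
            M ⊆ {v : Fin s → Euc d | ∑ i, ‖v i‖ ^ 2 ≤ R ^ 2} ∧
            volume M ≤ ENNReal.ofReal (C * R ^ (d * s) * η ^ (((d : ℝ) - 1) / 2)) ∧
            ∀ v : Fin s → Euc d, (∑ i, ‖v i‖ ^ 2 ≤ R ^ 2) → v ∉ M →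
              GoodConfig ε₃ 0 x v ∧ GoodConfig ε₀ δ x v :=
  stmt_15_general d s hd
end
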